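/- arXiv:1507.02542 — 3 statements merged into one kernel-verified Lean document; each statement's English description precedes it below -/
import Mathlib

section
/- Let f be a holomorphic function on a right half-plane {τ ∈ ℂ : Re τ > R} satisfying f(τ) = O(|τ|⁻¹) as |τ| → ∞ there. Then for every sufficiently large n ∈ ℕ the equation cos τ + f(τ) = 0 has exactly one solution τ_n in the strip (n−1)π ≤ Re τ ≤ nπ (with |Im τ| bounded uniformly in n), and this solution satisfies τ_n = (n − ½)π + h_n with h_n = O(n⁻¹) as n → ∞. -/
open Real Set

set_option maxHeartbeats 1000000

open Real Set

lemma aux_one_sub_cos (z : ℂ) (hz : ‖z‖ ≤ 1) : ‖1 - Complex.cos z‖ ≤ 2 * ‖z‖ := by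
  have hrw : 1 - Complex.cos z
      = -((Complex.exp (z * Complex.I) - 1) + (Complex.exp (-z * Complex.I) - 1)) / 2 := by
    rw [Complex.cos]; ring
  have h1 : ‖Complex.exp (z * Complex.I) - 1‖ ≤ 2 * ‖z‖ := by
    have := Complex.norm_exp_sub_one_le (x := z * Complex.I) (by simpa using hz)
    simpa using this
  have h2 : ‖Complex.exp (-z * Complex.I) - 1‖ ≤ 2 * ‖z‖ := by
    have := Complex.norm_exp_sub_one_le (x := -z * Complex.I) (by simpa using hz)
    simpa using this
  rw [hrw]
  calc ‖-((Complex.exp (z * Complex.I) - 1) + (Complex.exp (-z * Complex.I) - 1)) / 2‖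
      ≤ (‖Complex.exp (z * Complex.I) - 1‖ + ‖Complex.exp (-z * Complex.I) - 1‖) / 2 := by
        rw [norm_div, norm_neg]
        have h2n : ‖(2:ℂ)‖ = 2 := by norm_num
        rw [h2n]
        have := norm_add_le (Complex.exp (z * Complex.I) - 1) (Complex.exp (-z * Complex.I) - 1)
        linarith
    _ ≤ (2 * ‖z‖ + 2 * ‖z‖) / 2 := by gcongr
    _ = 2 * ‖z‖ := by ring

lemma aux_norm_cos_sq (z : ℂ) :
    ‖Complex.cos z‖ ^ 2 = Real.cos z.re ^ 2 + Real.sinh z.im ^ 2 := by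
  have h := Complex.cos_eq z
  have hre : (Complex.cos z).re = Real.cos z.re * Real.cosh z.im := by
    rw [h]; simp [Complex.cos_ofReal_re, Complex.sin_ofReal_re, Complex.cosh_ofReal_re,
      Complex.sinh_ofReal_re, Complex.sin_ofReal_im, Complex.sinh_ofReal_im]
  have him : (Complex.cos z).im = -(Real.sin z.re * Real.sinh z.im) := by
    rw [h]; simp [Complex.cos_ofReal_re, Complex.sin_ofReal_re, Complex.cosh_ofReal_re,
      Complex.sinh_ofReal_re, Complex.sin_ofReal_im, Complex.sinh_ofReal_im,
      Complex.cos_ofReal_im, Complex.cosh_ofReal_im]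
  rw [Complex.sq_norm, Complex.normSq_apply, hre, him]
  nlinarith [Real.sin_sq_add_cos_sq z.re, Real.cosh_sq z.im]

lemma aux_abs_le_sinh (y : ℝ) : |y| ≤ |Real.sinh y| := by
  rcases lt_trichotomy y 0 with h | h | h
  · rw [abs_of_neg h, abs_of_neg (by simpa [Real.sinh_neg_iff] using h)]
    have := (Real.self_lt_sinh_iff (x := -y)).2 (by linarith)
    rw [Real.sinh_neg] at this; linarith
  · simp [h]
  · rw [abs_of_pos h, abs_of_pos (by simpa [Real.sinh_pos_iff] using h)]
    exact (Real.self_lt_sinh_iff.2 h).le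

lemma aux_mul_le_abs_sin {t : ℝ} (ht : |t| ≤ π / 2) : 2 / π * |t| ≤ |Real.sin t| := by
  rcases le_or_gt 0 t with h | h
  · rw [abs_of_nonneg h, abs_of_nonneg (Real.sin_nonneg_of_nonneg_of_le_pi h
      (by linarith [Real.pi_pos, abs_of_nonneg h ▸ ht]))]
    exact Real.mul_le_sin h (by rwa [abs_of_nonneg h] at ht)
  · have hs : Real.sin t ≤ 0 := by
      have h0 : Real.sin (-t) ≥ 0 := Real.sin_nonneg_of_nonneg_of_le_pi (by linarith)
        (by rw [abs_of_neg h] at ht; linarith [Real.pi_pos])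
      rw [Real.sin_neg] at h0; linarith
    rw [abs_of_neg h, abs_of_nonpos hs]
    have := Real.mul_le_sin (x := -t) (by linarith) (by rwa [abs_of_neg h] at ht)
    rw [Real.sin_neg] at this; linarith


/-- Localization of the roots of the asymptotic characteristic equation
`cos τ + f τ = 0` for a holomorphic function `f` on a right half-plane that is
`O(|τ|⁻¹)` there: for every sufficiently large `n` there is exactly one solution `τ_n`
in the strip `(n−1)π ≤ Re τ ≤ nπ` (with `|Im τ_n|` bounded uniformly in `n`), and
`τ_n = (n − ½)π + h_n` with `h_n = O(n⁻¹)`. -/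
theorem rouche_root_localization
    (R : ℝ) (f : ℂ → ℂ)
    (hf_anal : DifferentiableOn ℂ f {τ : ℂ | R < τ.re})
    (hf_decay : ∃ C R' : ℝ, 0 < C ∧
      ∀ τ : ℂ, R < τ.re → R' ≤ ‖τ‖ → ‖f τ‖ ≤ C / ‖τ‖) :
    ∃ (B C' : ℝ) (N : ℕ), 0 < B ∧ 0 < C' ∧ ∀ n : ℕ, N ≤ n →
      ∃ τn : ℂ,
        (((n : ℝ) - 1) * π ≤ τn.re ∧ τn.re ≤ (n : ℝ) * π ∧
          Complex.cos τn + f τn = 0) ∧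
        (∀ τ : ℂ, ((n : ℝ) - 1) * π ≤ τ.re → τ.re ≤ (n : ℝ) * π →
          Complex.cos τ + f τ = 0 → τ = τn) ∧
        |τn.im| ≤ B ∧
        ‖τn - ((((n : ℝ) - 1/2) * π : ℝ) : ℂ)‖ ≤ C' / (n : ℝ) := by
  obtain ⟨C, R', hC, hdecay⟩ := hf_decay
  obtain ⟨N, hN⟩ := exists_nat_ge (max R (max R' 1) + 100 * C + 4)
  refine ⟨1, 2 * C, N, one_pos, by positivity, ?_⟩
  intro n hn
  have hπ3 : (3:ℝ) < π := Real.pi_gt_three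
  have hπ4 : π < 3.15 := Real.pi_lt_d2
  have hmax1 : (1:ℝ) ≤ max R (max R' 1) := le_max_of_le_right (le_max_right _ _)
  have hmaxR : R ≤ max R (max R' 1) := le_max_left _ _
  have hmaxR' : R' ≤ max R (max R' 1) := le_max_of_le_right (le_max_left _ _)
  have hnA : (max R (max R' 1) + 100 * C + 4) ≤ (n:ℝ) := hN.trans (Nat.cast_le.2 hn)
  have hn5 : (5:ℝ) ≤ (n:ℝ) := by nlinarith
  set P : ℝ := ((n:ℝ) - 1) * π with hPdef
  have hP_ge : max R (max R' 1) + 100 * C ≤ P := by nlinarith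
  have hP0 : 0 < P := by nlinarith
  set M : ℝ := C / P with hMdef
  have hM0 : 0 < M := div_pos hC hP0
  have hM : M ≤ 1/100 := by
    rw [hMdef, div_le_iff₀ hP0]; nlinarith
  set cre : ℝ := ((n:ℝ) - 1/2) * π with hcredef
  set c : ℂ := (cre : ℂ) with hcdef
  have hcre : cre = P + π/2 := by rw [hcredef, hPdef]; ring
  have hcreP : (n:ℝ) * π = P + π := by rw [hPdef]; ring
  -- f bound on the relevant region
  have hfb : ∀ τ : ℂ, P ≤ τ.re → ‖f τ‖ ≤ M := by
    intro τ hτ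
    have hRe : R < τ.re := by nlinarith
    have hnormτ : P ≤ ‖τ‖ :=
      hτ.trans ((le_abs_self _).trans (Complex.abs_re_le_norm τ))
    have hR'τ : R' ≤ ‖τ‖ := by nlinarith
    refine (hdecay τ hRe hR'τ).trans ?_
    rw [hMdef]
    gcongr
  have hopen : IsOpen {τ : ℂ | R < τ.re} :=
    isOpen_lt continuous_const Complex.continuous_re
  have hre_ball : ∀ z : ℂ, dist z c ≤ 1 → P ≤ z.re := by
    intro z hz
    have h1 : |(z - c).re| ≤ ‖z - c‖ := Complex.abs_re_le_norm _
    have h2 : ‖z - c‖ ≤ 1 := by rwa [dist_eq_norm] at hz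
    have h3 : (z - c).re = z.re - cre := by simp [hcdef]
    have := abs_le.1 (h1.trans h2)
    rw [h3] at this
    nlinarith [this.1]
  -- derivative bound via Cauchy estimate
  have hfd : ∀ z : ℂ, dist z c ≤ 1/2 → ‖deriv f z‖ ≤ 2 * M := by
    intro z hz
    have hsub : Metric.closedBall z (1/2) ⊆ {τ : ℂ | R < τ.re} := by
      intro w hw
      have hw' : dist w c ≤ 1 := by
        have := Metric.mem_closedBall.1 hw
        calc dist w c ≤ dist w z + dist z c := dist_triangle _ _ _
          _ ≤ 1/2 + 1/2 := by gcongr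
          _ = 1 := by norm_num
      have := hre_ball w hw'
      show R < w.re
      nlinarith
    have hdc : DiffContOnCl ℂ f (Metric.ball z (1/2)) := by
      apply DifferentiableOn.diffContOnCl
      rw [closure_ball z (by norm_num : (1/2:ℝ) ≠ 0)]
      exact hf_anal.mono hsub
    have hsphere : ∀ w ∈ Metric.sphere z (1/2), ‖f w‖ ≤ M := by
      intro w hw
      apply hfb
      apply hre_ball
      have hw' : dist w z = 1/2 := Metric.mem_sphere.1 hw
      calc dist w c ≤ dist w z + dist z c := dist_triangle _ _ _
        _ ≤ 1/2 + 1/2 := by rw [hw']; gcongr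
        _ = 1 := by norm_num
    have := Complex.norm_deriv_le_of_forall_mem_sphere_norm_le (by norm_num : (0:ℝ) < 1/2)
      hdc hsphere
    calc ‖deriv f z‖ ≤ M / (1/2) := this
      _ = 2 * M := by ring
  -- the sign and trig values at the center
  set s : ℝ := -((-1:ℝ)^n) with hsdef
  have hs2 : s^2 = 1 := by
    rw [hsdef]; rcases Nat.even_or_odd n with h | h
    · rw [h.neg_one_pow]; norm_num
    · rw [h.neg_one_pow]; norm_num
  have hsabs : |s| = 1 := by
    rw [hsdef, abs_neg, abs_pow, abs_neg, abs_one, one_pow]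
  have hcrerw : cre = (n:ℝ) * π - π/2 := by rw [hcredef]; ring
  have hcosc : Real.cos cre = 0 := by
    rw [hcrerw, Real.cos_nat_mul_pi_sub, Real.cos_pi_div_two, mul_zero]
  have hsinc : Real.sin cre = s := by
    rw [hcrerw, Real.sin_nat_mul_pi_sub, Real.sin_pi_div_two, mul_one, hsdef]
  have hCcos : Complex.cos c = 0 := by
    rw [hcdef, ← Complex.ofReal_cos, hcosc, Complex.ofReal_zero]
  have hCsin : Complex.sin c = (s:ℂ) := by
    rw [hcdef, ← Complex.ofReal_sin, hsinc]
  have hkey : ∀ h : ℂ, Complex.cos (c + h) = -(s:ℂ) * Complex.sin h := by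
    intro h; rw [Complex.cos_add, hCcos, hCsin]; ring
  have hs2c : ((s:ℂ))^2 = 1 := by
    rw [← Complex.ofReal_pow, hs2, Complex.ofReal_one]
  -- the fixed point map
  set Φ : ℂ → ℂ := fun h => h - Complex.sin h + (s:ℂ) * f (c + h) with hΦdef
  have hroot_iff : ∀ h : ℂ, Φ h = h ↔ Complex.cos (c + h) + f (c + h) = 0 := by
    intro h
    rw [hkey, hΦdef]
    constructor
    · intro hfix
      have h1 : Complex.sin h = (s:ℂ) * f (c + h) := by
        have := sub_eq_zero.2 hfix
        linear_combination -this
      linear_combination (-(s:ℂ)) * h1 - f (c + h) * hs2c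
    · intro hroot
      have h1 : Complex.sin h = (s:ℂ) * f (c + h) := by
        linear_combination (-(s:ℂ)) * hroot - Complex.sin h * hs2c
      linear_combination -h1
  -- Lipschitz bound on the ball of radius 1/8
  set Bl : Set ℂ := Metric.closedBall (0:ℂ) (1/8) with hBldef
  have hBl_dist : ∀ h ∈ Bl, dist (c + h) c ≤ 1/2 := by
    intro h hh
    have : ‖h‖ ≤ 1/8 := by
      simpa [hBldef, Metric.mem_closedBall, dist_zero_right] using hh
    rw [dist_eq_norm]
    simpa using this.trans (by norm_num)
  set Φ' : ℂ → ℂ := fun h => 1 - Complex.cos h + (s:ℂ) * deriv f (c + h) with hΦ'def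
  have hder : ∀ h ∈ Bl, HasDerivWithinAt Φ (Φ' h) Bl h := by
    intro h hh
    have hmem : c + h ∈ {τ : ℂ | R < τ.re} := by
      have := hre_ball (c + h) ((hBl_dist h hh).trans (by norm_num))
      show R < (c + h).re
      nlinarith
    have hdf : DifferentiableAt ℂ f (c + h) :=
      (hf_anal.differentiableAt (hopen.mem_nhds hmem))
    have h1 : HasDerivAt (fun x : ℂ => f (c + x)) (deriv f (c + h)) h := by
      have := hdf.hasDerivAt.comp h ((hasDerivAt_id h).const_add c)
      simpa [Function.comp_def] using this
    have h2 := ((hasDerivAt_id h).sub (Complex.hasDerivAt_sin h)).add (h1.const_mul (s:ℂ))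
    have h3 : HasDerivAt Φ (Φ' h) h := by
      rw [hΦdef, hΦ'def]
      exact h2
    exact h3.hasDerivWithinAt
  have hbound : ∀ h ∈ Bl, ‖Φ' h‖ ≤ 1/2 := by
    intro h hh
    have h8 : ‖h‖ ≤ 1/8 := by
      simpa [hBldef, Metric.mem_closedBall, dist_zero_right] using hh
    have hcos8 : ‖1 - Complex.cos h‖ ≤ 2 * ‖h‖ := aux_one_sub_cos h (h8.trans (by norm_num))
    have hdf : ‖deriv f (c + h)‖ ≤ 2 * M := hfd _ (hBl_dist h hh)
    have hsn : ‖(s:ℂ)‖ = 1 := by rw [Complex.norm_real, Real.norm_eq_abs, hsabs]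
    rw [hΦ'def]
    calc ‖1 - Complex.cos h + (s:ℂ) * deriv f (c + h)‖
        ≤ ‖1 - Complex.cos h‖ + ‖(s:ℂ) * deriv f (c + h)‖ := norm_add_le _ _
      _ = ‖1 - Complex.cos h‖ + ‖deriv f (c + h)‖ := by rw [norm_mul, hsn, one_mul]
      _ ≤ 2 * (1/8) + 2 * M := by
          have h9 : ‖1 - Complex.cos h‖ ≤ 2 * (1/8) := hcos8.trans (by linarith)
          linarith
      _ ≤ 1/2 := by nlinarith
  have hlip : ∀ h₁ ∈ Bl, ∀ h₂ ∈ Bl, ‖Φ h₁ - Φ h₂‖ ≤ 1/2 * ‖h₁ - h₂‖ := by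
    intro h₁ H1 h₂ H2
    exact (convex_closedBall (0:ℂ) (1/8)).norm_image_sub_le_of_norm_hasDerivWithin_le
      (f' := Φ') hder hbound H2 H1
  -- the contraction on the small ball
  have h2M18 : 2 * M ≤ 1/8 := by linarith
  set S : Set ℂ := Metric.closedBall (0:ℂ) (2*M) with hSdef
  have hS_sub : S ⊆ Bl := Metric.closedBall_subset_closedBall (by linarith)
  have hcrec : c.re = cre := by simp [hcdef]
  have hΦ0 : ‖Φ 0‖ ≤ M := by
    have h1 : Φ 0 = (s:ℂ) * f c := by rw [hΦdef]; simp
    rw [h1, norm_mul, Complex.norm_real, Real.norm_eq_abs, hsabs, one_mul]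
    apply hfb
    rw [hcrec]
    linarith [Real.pi_pos]
  have h0S : (0:ℂ) ∈ S := by
    simp only [hSdef, Metric.mem_closedBall, dist_self]
    positivity
  have hmaps : MapsTo Φ S S := by
    intro h hh
    have hh2 : ‖h‖ ≤ 2*M := by
      simpa [hSdef, Metric.mem_closedBall, dist_zero_right] using hh
    have hl := hlip h (hS_sub hh) 0 (hS_sub h0S)
    rw [sub_zero] at hl
    have htri : ‖Φ h‖ ≤ ‖Φ h - Φ 0‖ + ‖Φ 0‖ := by
      have := norm_add_le (Φ h - Φ 0) (Φ 0)
      simpa using this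
    show Φ h ∈ S
    simp only [hSdef, Metric.mem_closedBall, dist_zero_right]
    linarith
  have hcomplete : IsComplete S := Metric.isClosed_closedBall.isComplete
  have hcontr : ContractingWith (1/2 : NNReal) (hmaps.restrict Φ S S) := by
    refine ⟨by rw [← NNReal.coe_lt_coe]; norm_num, LipschitzWith.of_dist_le_mul ?_⟩
    intro x y
    have hl := hlip x.val (hS_sub x.2) y.val (hS_sub y.2)
    have hcast : ((1/2 : NNReal) : ℝ) = 1/2 := by norm_num
    simp only [Subtype.dist_eq, MapsTo.val_restrict_apply, dist_eq_norm, hcast]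
    exact hl
  obtain ⟨h₀, hh₀S, hfix0, -, -⟩ :=
    hcontr.exists_fixedPoint' hcomplete hmaps h0S (edist_ne_top (0:ℂ) (Φ 0))
  -- localization of any root in the strip
  have hloc : ∀ τ : ℂ, P ≤ τ.re → τ.re ≤ (n:ℝ)*π → Complex.cos τ + f τ = 0 →
      τ - c ∈ Bl ∧ Φ (τ - c) = τ - c := by
    intro τ hre1 hre2 hroot
    have hfτ : ‖f τ‖ ≤ M := hfb τ hre1
    have hcosτ : ‖Complex.cos τ‖ ≤ M := by
      have heq : Complex.cos τ = -f τ := eq_neg_of_add_eq_zero_left hroot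
      rw [heq, norm_neg]; exact hfτ
    have hsq := aux_norm_cos_sq τ
    have h1 : ‖Complex.cos τ‖^2 ≤ M^2 := by
      nlinarith [norm_nonneg (Complex.cos τ)]
    have hcosx : |Real.cos τ.re| ≤ M := by
      nlinarith [sq_abs (Real.cos τ.re), sq_nonneg (Real.sinh τ.im),
        abs_nonneg (Real.cos τ.re)]
    have hsinhy : |Real.sinh τ.im| ≤ M := by
      nlinarith [sq_abs (Real.sinh τ.im), sq_nonneg (Real.cos τ.re),
        abs_nonneg (Real.sinh τ.im)]
    have him : |τ.im| ≤ M := (aux_abs_le_sinh τ.im).trans hsinhy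
    set t : ℝ := τ.re - cre with htdef
    have ht2 : |t| ≤ π/2 := by
      rw [abs_le, htdef]
      constructor <;> nlinarith
    have hcosx' : |Real.cos τ.re| = |Real.sin t| := by
      have hτre : τ.re = cre + t := by rw [htdef]; ring
      rw [hτre, Real.cos_add, hcosc, hsinc, zero_mul, zero_sub, abs_neg, abs_mul, hsabs,
        one_mul]
    have hsint : 2/π * |t| ≤ M := (aux_mul_le_abs_sin ht2).trans (le_of_eq_of_le hcosx'.symm hcosx)
    have ht : |t| ≤ π/2 * M := by
      have hπ0 : (0:ℝ) ≤ π/2 := by positivity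
      have hmul := mul_le_mul_of_nonneg_left hsint hπ0
      have hid : π/2 * (2/π * |t|) = |t| := by
        field_simp
      linarith
    have hre' : (τ - c).re = t := by simp [hcdef, htdef]
    have him' : (τ - c).im = τ.im := by simp [hcdef]
    have hnorm : ‖τ - c‖ ≤ π/2 * M + M := by
      have h2 : ‖τ - c‖ ≤ |(τ - c).re| + |(τ - c).im| := by
        exact Complex.norm_le_abs_re_add_abs_im _
      rw [hre', him'] at h2
      linarith
    have hBlmem : τ - c ∈ Bl := by
      simp only [hBldef, Metric.mem_closedBall, dist_zero_right]
      have h1 : π/2 ≤ 1.575 := by linarith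
      have h2 : π/2 * M ≤ 1.575 * (1/100) :=
        mul_le_mul h1 hM hM0.le (by norm_num)
      linarith
    refine ⟨hBlmem, (hroot_iff _).2 ?_⟩
    have : c + (τ - c) = τ := by ring
    rw [this]; exact hroot
  -- uniqueness of fixed points in the ball
  have huniq : ∀ g₁ ∈ Bl, ∀ g₂ ∈ Bl, Φ g₁ = g₁ → Φ g₂ = g₂ → g₁ = g₂ := by
    intro g₁ H1 g₂ H2 e1 e2
    have hl := hlip g₁ H1 g₂ H2
    rw [e1, e2] at hl
    have h0 : ‖g₁ - g₂‖ ≤ 0 := by linarith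
    have := le_antisymm h0 (norm_nonneg _)
    exact sub_eq_zero.1 (norm_eq_zero.1 this)
  -- assemble
  have hh₀ : ‖h₀‖ ≤ 2*M := by
    simpa [hSdef, Metric.mem_closedBall, dist_zero_right] using hh₀S
  have hre0 : |h₀.re| ≤ 2*M := (Complex.abs_re_le_norm h₀).trans hh₀
  have him0 : |h₀.im| ≤ 2*M := (Complex.abs_im_le_norm h₀).trans hh₀
  have hren : (c + h₀).re = cre + h₀.re := by simp [hcdef]
  have habs0 := abs_le.1 hre0
  refine ⟨c + h₀, ⟨?_, ?_, (hroot_iff h₀).1 hfix0⟩, ?_, ?_, ?_⟩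
  · rw [hren]; linarith [habs0.1, hM, hπ3, hcre]
  · rw [hren]; linarith [habs0.2, hM, hπ3, hcre, hcreP]
  · intro τ hτ1 hτ2 hτroot
    obtain ⟨hBlτ, hfixτ⟩ := hloc τ hτ1 hτ2 hτroot
    have := huniq (τ - c) hBlτ h₀ (hS_sub hh₀S) hfixτ hfix0
    linear_combination this
  · have : (c + h₀).im = h₀.im := by simp [hcdef]
    rw [this]
    linarith [abs_le.1 him0]
  · have hsimp : c + h₀ - c = h₀ := by ring
    rw [hsimp]
    have hnP : (n:ℝ) ≤ P := by
      have h1 : ((n:ℝ) - 1) * 3 ≤ ((n:ℝ) - 1) * π :=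
        mul_le_mul_of_nonneg_left hπ3.le (by linarith)
      rw [hPdef]
      linarith
    have hn0 : (0:ℝ) < (n:ℝ) := by linarith
    calc ‖h₀‖ ≤ 2 * M := hh₀
      _ = 2 * C / P := by rw [hMdef]; ring
      _ ≤ 2 * C / (n:ℝ) := by gcongr
end

section
/- For the Crank–Nicolson fully discrete scheme, the discrete norm satisfies, for every n ∈ ℕ₀: ‖zⁿ⁺¹‖² = ‖zⁿ‖² − Δt{ δ₁((u^{n+1}_x(L)−uⁿ_x(L))/Δt)² + ½(q₁·(ζ₁^{n+1}+ζ₁ⁿ)/2 + δ̃₁(u^{n+1}_x(L)−uⁿ_x(L))/Δt)² + δ₂((u^{n+1}(L)−uⁿ(L))/Δt)² + ½(q₂·(ζ₂^{n+1}+ζ₂ⁿ)/2 + δ̃₂(u^{n+1}(L)−uⁿ(L))/Δt)² + (ε₁/2)((ζ₁^{n+1}+ζ₁ⁿ)/2)^⊤P₁((ζ₁^{n+1}+ζ₁ⁿ)/2) + (ε₂/2)((ζ₂^{n+1}+ζ₂ⁿ)/2)^⊤P₂((ζ₂^{n+1}+ζ₂ⁿ)/2) }. In particular ‖zⁿ⁺¹‖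 ≤ ‖zⁿ‖, i.e. the scheme is dissipative, for any finite-dimensional subspace W_h ⊂ H̃²₀(0,L) and any time step Δt > 0. -/
open Real Set intervalIntegral Matrix

section CNAux
open MeasureTheory

private lemma cn_bdd_int {L : ℝ} (hL : 0 ≤ L) {f : ℝ → ℝ}
    (hm : AEStronglyMeasurable f (volume.restrict (Set.Ioc 0 L)))
    {C : ℝ} (hb : ∀ x ∈ Set.Icc 0 L, |f x| ≤ C) :
    IntervalIntegrable f volume 0 L := by
  rw [intervalIntegrable_iff, Set.uIoc_of_le hL]
  refine (MeasureTheory.integrable_const C).mono' hm ?_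
  rw [MeasureTheory.ae_restrict_iff' measurableSet_Ioc]
  exact Filter.Eventually.of_forall fun x hx => by
    simpa [Real.norm_eq_abs] using hb x ⟨le_of_lt hx.1, hx.2⟩

private lemma cn_sum_mul_integral {L : ℝ} {N : ℕ} (g : Fin N → ℝ) (f : Fin N → ℝ → ℝ)
    (hf : ∀ j, IntervalIntegrable (f j) volume 0 L) :
    ∑ j, g j * ∫ x in (0:ℝ)..L, f j x = ∫ x in (0:ℝ)..L, ∑ j, g j * f j x := by
  rw [intervalIntegral.integral_finset_sum (fun j _ => (hf j).const_mul (g j))]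
  simp [intervalIntegral.integral_const_mul]

private lemma cn_sum_avg {N : ℕ} (a b φ : Fin N → ℝ) :
    ∑ i, (a i + b i) / 2 * φ i = ((∑ i, a i * φ i) + ∑ i, b i * φ i) / 2 := by
  rw [← Finset.sum_add_distrib, Finset.sum_div]
  exact Finset.sum_congr rfl fun i _ => by ring

private lemma cn_sum_sub {N : ℕ} (a b φ : Fin N → ℝ) :
    ∑ i, (a i - b i) * φ i = (∑ i, a i * φ i) - ∑ i, b i * φ i := by
  rw [← Finset.sum_sub_distrib]
  exact Finset.sum_congr rfl fun i _ => by ring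

private lemma cn_sum_sub_div {N : ℕ} (a b φ : Fin N → ℝ) (t : ℝ) :
    ∑ i, (a i - b i) / t * φ i = ((∑ i, a i * φ i) - ∑ i, b i * φ i) / t := by
  rw [← Finset.sum_sub_distrib, Finset.sum_div]
  exact Finset.sum_congr rfl fun i _ => by ring

private lemma cn_sum_pull {N : ℕ} (g φ : Fin N → ℝ) (K : ℝ) :
    ∑ j, g j * (K * φ j) = K * ∑ j, g j * φ j := by
  rw [Finset.mul_sum]
  exact Finset.sum_congr rfl fun j _ => by ring

private lemma cn_energy_int {L : ℝ} (hL : 0 ≤ L) {N : ℕ} (ρ : ℝ → ℝ)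
    (hρ : ContinuousOn ρ (Set.Icc 0 L))
    (W : Fin N → ℝ → ℝ)
    (hWm : ∀ i, AEStronglyMeasurable (W i) (volume.restrict (Set.Ioc 0 L)))
    (hWb : ∀ i, ∃ B, ∀ x ∈ Set.Icc 0 L, |W i x| ≤ B)
    (c g a b : Fin N → ℝ)
    (hpt : ∀ x, (∑ i, c i * W i x) * (∑ j, g j * W j x)
          = ((∑ i, a i * W i x)^2 - (∑ i, b i * W i x)^2)/2) :
    ∑ j, g j * (∫ x in (0:ℝ)..L, ρ x * (∑ i, c i * W i x) * W j x)
    = (1/2) * (∫ x in (0:ℝ)..L, ρ x * (∑ i, a i * W i x)^2)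
      - (1/2) * (∫ x in (0:ℝ)..L, ρ x * (∑ i, b i * W i x)^2) := by
  choose B hB using hWb
  have h0L : (0:ℝ) ∈ Set.Icc 0 L := ⟨le_refl _, hL⟩
  obtain ⟨Cρ, hCρ⟩ := isCompact_Icc.exists_bound_of_continuousOn hρ
  have hρm : AEStronglyMeasurable ρ (volume.restrict (Set.Ioc 0 L)) :=
    (hρ.mono Set.Ioc_subset_Icc_self).aestronglyMeasurable measurableSet_Ioc
  have hCρ0 : 0 ≤ Cρ := le_trans (norm_nonneg _) (hCρ 0 h0L)
  have hSm : ∀ u : Fin N → ℝ,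
      AEStronglyMeasurable (fun x => ∑ i, u i * W i x)
        (volume.restrict (Set.Ioc 0 L)) := fun u =>
    Finset.aestronglyMeasurable_fun_sum _ (fun i _ => (hWm i).const_mul (u i))
  have hSb : ∀ u : Fin N → ℝ, ∀ x ∈ Set.Icc 0 L,
      |∑ i, u i * W i x| ≤ ∑ i, |u i| * B i := by
    intro u x hx
    refine le_trans (Finset.abs_sum_le_sum_abs _ _) (Finset.sum_le_sum fun i _ => ?_)
    rw [abs_mul]
    exact mul_le_mul_of_nonneg_left (hB i x hx) (abs_nonneg _)
  have hSb0 : ∀ u : Fin N → ℝ, 0 ≤ ∑ i, |u i| * B i := fun u =>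
    le_trans (abs_nonneg _) (hSb u 0 h0L)
  have key : ∀ u v : Fin N → ℝ, IntervalIntegrable
      (fun x => ρ x * (∑ i, u i * W i x) * (∑ i, v i * W i x)) volume 0 L := by
    intro u v
    refine cn_bdd_int hL ((hρm.mul (hSm u)).mul (hSm v))
      (C := Cρ * (∑ i, |u i| * B i) * (∑ i, |v i| * B i)) (fun x hx => ?_)
    rw [abs_mul, abs_mul]
    have h1 : |ρ x| ≤ Cρ := by simpa [Real.norm_eq_abs] using hCρ x hx
    exact mul_le_mul (mul_le_mul h1 (hSb u x hx) (abs_nonneg _) hCρ0)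
      (hSb v x hx) (abs_nonneg _) (mul_nonneg hCρ0 (hSb0 u))
  have keyj : ∀ j : Fin N, IntervalIntegrable
      (fun x => ρ x * (∑ i, c i * W i x) * W j x) volume 0 L := by
    intro j
    refine cn_bdd_int hL ((hρm.mul (hSm c)).mul (hWm j))
      (C := Cρ * (∑ i, |c i| * B i) * B j) (fun x hx => ?_)
    rw [abs_mul, abs_mul]
    have h1 : |ρ x| ≤ Cρ := by simpa [Real.norm_eq_abs] using hCρ x hx
    exact mul_le_mul (mul_le_mul h1 (hSb c x hx) (abs_nonneg _) hCρ0)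
      (hB j x hx) (abs_nonneg _) (mul_nonneg hCρ0 (hSb0 c))
  have hqa : IntervalIntegrable (fun x => ρ x * (∑ i, a i * W i x)^2) volume 0 L := by
    simpa only [pow_two, ← mul_assoc] using key a a
  have hqb : IntervalIntegrable (fun x => ρ x * (∑ i, b i * W i x)^2) volume 0 L := by
    simpa only [pow_two, ← mul_assoc] using key b b
  rw [cn_sum_mul_integral g _ keyj]
  have hptw : ∀ x : ℝ, ∑ j, g j * (ρ x * (∑ i, c i * W i x) * W j x)
      = (1/2) * (ρ x * (∑ i, a i * W i x)^2) - (1/2) * (ρ x * (∑ i, b i * W i x)^2) := by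
    intro x
    have e1 : ∀ K : ℝ, ∑ j, g j * (K * W j x) = K * ∑ j, g j * W j x := by
      intro K
      rw [Finset.mul_sum]
      exact Finset.sum_congr rfl fun j _ => by ring
    rw [e1, mul_assoc, hpt x]; ring
  rw [show (fun x => ∑ j, g j * (ρ x * (∑ i, c i * W i x) * W j x))
      = fun x => (1/2) * (ρ x * (∑ i, a i * W i x)^2)
        - (1/2) * (ρ x * (∑ i, b i * W i x)^2) from funext hptw]
  rw [intervalIntegral.integral_sub (hqa.const_mul _) (hqb.const_mul _),
    intervalIntegral.integral_const_mul, intervalIntegral.integral_const_mul]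

private lemma cn_quad_vecMulVec {nn : ℕ} (q x : Fin nn → ℝ) :
    x ⬝ᵥ (Matrix.vecMulVec q q).mulVec x = (q ⬝ᵥ x)^2 := by
  simp only [dotProduct, Matrix.mulVec, Matrix.vecMulVec_apply, sq]
  rw [Finset.sum_mul_sum]
  exact Finset.sum_congr rfl fun j _ => by
    rw [Finset.mul_sum]; exact Finset.sum_congr rfl fun k _ => by ring

private lemma cn_sym_dot {nn : ℕ} {P : Matrix (Fin nn) (Fin nn) ℝ} (hP : Pᵀ = P)
    (u v : Fin nn → ℝ) : u ⬝ᵥ P.mulVec v = v ⬝ᵥ P.mulVec u := by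
  rw [Matrix.dotProduct_mulVec, ← Matrix.mulVec_transpose, hP, dotProduct_comm]

private lemma cn_ctrl_step {nn : ℕ} (A P : Matrix (Fin nn) (Fin nn) ℝ)
    (hP : Pᵀ = P)
    (b c q : Fin nn → ℝ) (ε dd δ y Δt : ℝ) (hΔt : Δt ≠ 0)
    (hKYP : P * A + A.transpose * P = -(Matrix.vecMulVec q q) - ε • P)
    (hPb : P.mulVec b = c - Real.sqrt (2*(dd-δ)) • q)
    (ζp ζm : Fin nn → ℝ)
    (hstep : (fun l => (ζp l - ζm l)/Δt) = A.mulVec (fun l => (ζp l + ζm l)/2) + y • b) :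
    (1/2) * (ζp ⬝ᵥ P.mulVec ζp) - (1/2) * (ζm ⬝ᵥ P.mulVec ζm)
    = Δt * ( -(1/2) * (q ⬝ᵥ (fun l => (ζp l + ζm l)/2))^2
      - (ε/2) * ((fun l => (ζp l + ζm l)/2) ⬝ᵥ P.mulVec (fun l => (ζp l + ζm l)/2))
      + y * (c ⬝ᵥ (fun l => (ζp l + ζm l)/2))
      - Real.sqrt (2*(dd-δ)) * y * (q ⬝ᵥ (fun l => (ζp l + ζm l)/2)) ) := by
  set m : Fin nn → ℝ := fun l => (ζp l + ζm l)/2 with hm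
  have hD : ζp - ζm = Δt • (A.mulVec m + y • b) := by
    funext l
    have h := congrFun hstep l
    field_simp at h
    simp only [Pi.sub_apply, Pi.smul_apply, Pi.add_apply, smul_eq_mul] at h ⊢
    linarith [h]
  have hS : ζp + ζm = (2:ℝ) • m := by
    funext l; simp [hm, Pi.smul_apply, smul_eq_mul]; ring
  have hdiff : (1/2) * (ζp ⬝ᵥ P.mulVec ζp) - (1/2) * (ζm ⬝ᵥ P.mulVec ζm)
      = (1/2) * ((ζp - ζm) ⬝ᵥ P.mulVec (ζp + ζm)) := by
    rw [sub_dotProduct, Matrix.mulVec_add, dotProduct_add,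
      dotProduct_add]
    rw [cn_sym_dot hP ζp ζm]
    ring
  rw [hdiff, hD, hS]
  rw [smul_dotProduct, Matrix.mulVec_smul, dotProduct_smul,
    add_dotProduct, smul_dotProduct]
  have hAm : (A.mulVec m) ⬝ᵥ P.mulVec m
      = -(1/2) * (q ⬝ᵥ m)^2 - (ε/2) * (m ⬝ᵥ P.mulVec m) := by
    have h1 : (A.mulVec m) ⬝ᵥ P.mulVec m = m ⬝ᵥ (P * A).mulVec m := by
      rw [← Matrix.mulVec_mulVec, cn_sym_dot hP]
    have h2 : (A.mulVec m) ⬝ᵥ P.mulVec m = m ⬝ᵥ (A.transpose * P).mulVec m := by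
      rw [← Matrix.mulVec_mulVec, Matrix.mulVec_transpose, dotProduct_comm m,
        ← Matrix.dotProduct_mulVec, dotProduct_comm]
    have h3 : m ⬝ᵥ ((P * A) + (A.transpose * P)).mulVec m
        = -(q ⬝ᵥ m)^2 - ε * (m ⬝ᵥ P.mulVec m) := by
      rw [hKYP, Matrix.sub_mulVec, dotProduct_sub, Matrix.neg_mulVec,
        dotProduct_neg, cn_quad_vecMulVec, Matrix.smul_mulVec,
        dotProduct_smul]
      simp [smul_eq_mul]
    rw [Matrix.add_mulVec, dotProduct_add, ← h1, ← h2] at h3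
    linarith
  have hbm : b ⬝ᵥ P.mulVec m = c ⬝ᵥ m - Real.sqrt (2*(dd-δ)) * (q ⬝ᵥ m) := by
    rw [cn_sym_dot hP b m, hPb, dotProduct_sub, dotProduct_smul,
      dotProduct_comm m c, dotProduct_comm m q]
    simp [smul_eq_mul]
  rw [hAm, hbm]
  simp only [smul_eq_mul]
  ring

end CNAux

set_option maxHeartbeats 1000000 in
/-- unconditional dissipativity of the Crank–Nicolson fully discrete
scheme for the closed-loop beam control system: for any finite-dimensional subspace
`W_h ⊂ H̃²₀(0,L)` (spanned by `w i`), any time step `Δt > 0` and every `n ∈ ℕ₀`,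
the discrete norm satisfies the explicit dissipation identity, and in particular
`‖zⁿ⁺¹‖ ≤ ‖zⁿ‖`. The scheme is written in coefficient form
`uⁿ = ∑ᵢ Uⁿᵢ wᵢ`, `vⁿ = ∑ᵢ Vⁿᵢ wᵢ`. -/

theorem crank_nicolson_dissipativity
    -- beam data
    (L : ℝ) (hL : 0 < L)
    (μf Λf : ℝ → ℝ)
    (hμ : ContDiffOn ℝ 4 μf (Set.Icc 0 L)) (hΛ : ContDiffOn ℝ 4 Λf (Set.Icc 0 L))
    (hμpos : ∀ x ∈ Set.Icc 0 L, 0 < μf x) (hΛpos : ∀ x ∈ Set.Icc 0 L, 0 < Λf x)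
    (M J : ℝ) (hM : 0 < M) (hJ : 0 < J)
    -- controller data
    (nn : ℕ)
    (A₁ A₂ : Matrix (Fin nn) (Fin nn) ℝ)
    (hA₁ : ∀ lam ∈ spectrum ℂ (A₁.map Complex.ofReal), lam.re < 0)
    (hA₂ : ∀ lam ∈ spectrum ℂ (A₂.map Complex.ofReal), lam.re < 0)
    (b₁ b₂ c₁ c₂ : Fin nn → ℝ)
    (k₁ k₂ : ℝ) (hk₁ : 0 < k₁) (hk₂ : 0 < k₂)
    (d₁ d₂ δ₁ δ₂ : ℝ) (hδ₁ : 0 < δ₁) (hδ₂ : 0 < δ₂) (hd₁ : δ₁ ≤ d₁) (hd₂ : δ₂ ≤ d₂)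
    (hSPR₁ : ∀ ω : ℝ, 0 ≤ ω → d₁ ≤ (dotProduct
      ((((Complex.I * (ω:ℂ)) • (1 : Matrix (Fin nn) (Fin nn) ℂ)
          - A₁.map Complex.ofReal)⁻¹).mulVec (fun i => (b₁ i : ℂ)))
      (fun i => (c₁ i : ℂ))).re + d₁)
    (hSPR₂ : ∀ ω : ℝ, 0 ≤ ω → d₂ ≤ (dotProduct
      ((((Complex.I * (ω:ℂ)) • (1 : Matrix (Fin nn) (Fin nn) ℂ)
          - A₂.map Complex.ofReal)⁻¹).mulVec (fun i => (b₂ i : ℂ)))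
      (fun i => (c₂ i : ℂ))).re + d₂)
    -- Kalman-Yakubovic-Popov data
    (P₁ P₂ : Matrix (Fin nn) (Fin nn) ℝ) (hP₁ : P₁.PosDef) (hP₂ : P₂.PosDef)
    (ε₁ ε₂ : ℝ) (hε₁ : 0 < ε₁) (hε₂ : 0 < ε₂)
    (q₁ q₂ : Fin nn → ℝ)
    (hKYP₁ : P₁ * A₁ + A₁.transpose * P₁ = -(Matrix.vecMulVec q₁ q₁) - ε₁ • P₁)
    (hKYP₂ : P₂ * A₂ + A₂.transpose * P₂ = -(Matrix.vecMulVec q₂ q₂) - ε₂ • P₂)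
    (hPb₁ : P₁.mulVec b₁ = c₁ - Real.sqrt (2 * (d₁ - δ₁)) • q₁)
    (hPb₂ : P₂.mulVec b₂ = c₂ - Real.sqrt (2 * (d₂ - δ₂)) • q₂)
    -- the finite element space W_h ⊂ H̃²₀(0,L), spanned by w₁, …, w_N
    (N : ℕ) (w : Fin N → ℝ → ℝ)
    (hw : ∀ i, ContDiff ℝ 1 (w i))
    (hw0 : ∀ i, w i 0 = 0) (hw0x : ∀ i, deriv (w i) 0 = 0)
    (hw2 : ∀ i, ∃ S : Finset ℝ, ∀ x ∉ S, ContDiffAt ℝ 2 (w i) x)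
    (hwb : ∀ i, ∃ B : ℝ, ∀ x ∈ Set.Icc (0:ℝ) L, |iteratedDeriv 2 (w i) x| ≤ B)
    -- the time step and the Crank–Nicolson iterates
    (Δt : ℝ) (hΔt : 0 < Δt)
    (U V : ℕ → Fin N → ℝ) (ζ₁ ζ₂ : ℕ → Fin nn → ℝ)
    -- (CN1): (uⁿ⁺¹ − uⁿ)/Δt = (vⁿ⁺¹ + vⁿ)/2
    (hCN1 : ∀ n : ℕ, ∀ i : Fin N, (U (n+1) i - U n i) / Δt = (V (n+1) i + V n i) / 2)
    -- (CN2), tested with each basis function w_j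
    (hCN2 : ∀ n : ℕ, ∀ j : Fin N,
      (∫ x in (0:ℝ)..L, μf x * (∑ i, (V (n+1) i - V n i) / Δt * w i x) * w j x)
      + (∫ x in (0:ℝ)..L, Λf x * (∑ i, (U (n+1) i + U n i) / 2 * iteratedDeriv 2 (w i) x)
          * iteratedDeriv 2 (w j) x)
      + M * (∑ i, (V (n+1) i - V n i) / Δt * w i L) * w j L
      + J * (∑ i, (V (n+1) i - V n i) / Δt * deriv (w i) L) * deriv (w j) L
      + k₁ * (∑ i, (U (n+1) i + U n i) / 2 * deriv (w i) L) * deriv (w j) L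
      + k₂ * (∑ i, (U (n+1) i + U n i) / 2 * w i L) * w j L
      + d₁ * (∑ i, (V (n+1) i + V n i) / 2 * deriv (w i) L) * deriv (w j) L
      + d₂ * (∑ i, (V (n+1) i + V n i) / 2 * w i L) * w j L
      + (c₁ ⬝ᵥ (fun l => (ζ₁ (n+1) l + ζ₁ n l) / 2)) * deriv (w j) L
      + (c₂ ⬝ᵥ (fun l => (ζ₂ (n+1) l + ζ₂ n l) / 2)) * w j L = 0)
    -- (CN3), (CN4)
    (hCN3 : ∀ n : ℕ, (fun l => (ζ₁ (n+1) l - ζ₁ n l) / Δt)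
      = A₁.mulVec (fun l => (ζ₁ (n+1) l + ζ₁ n l) / 2)
        + ((∑ i, (V (n+1) i + V n i) / 2 * deriv (w i) L)) • b₁)
    (hCN4 : ∀ n : ℕ, (fun l => (ζ₂ (n+1) l - ζ₂ n l) / Δt)
      = A₂.mulVec (fun l => (ζ₂ (n+1) l + ζ₂ n l) / 2)
        + ((∑ i, (V (n+1) i + V n i) / 2 * w i L)) • b₂) :
    -- conclusion: exact norm dissipation identity and monotonicity of the norm
    ∀ n : ℕ,
      ((1/2) * (∫ x in (0:ℝ)..L, Λf x * (∑ i, U (n+1) i * iteratedDeriv 2 (w i) x)^2)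
        + (1/2) * (∫ x in (0:ℝ)..L, μf x * (∑ i, V (n+1) i * w i x)^2)
        + M/2 * (∑ i, V (n+1) i * w i L)^2 + J/2 * (∑ i, V (n+1) i * deriv (w i) L)^2
        + k₁/2 * (∑ i, U (n+1) i * deriv (w i) L)^2 + k₂/2 * (∑ i, U (n+1) i * w i L)^2
        + (1/2) * (ζ₁ (n+1) ⬝ᵥ P₁.mulVec (ζ₁ (n+1)))
        + (1/2) * (ζ₂ (n+1) ⬝ᵥ P₂.mulVec (ζ₂ (n+1))))
      =
      ((1/2) * (∫ x in (0:ℝ)..L, Λf x * (∑ i, U n i * iteratedDeriv 2 (w i) x)^2)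
        + (1/2) * (∫ x in (0:ℝ)..L, μf x * (∑ i, V n i * w i x)^2)
        + M/2 * (∑ i, V n i * w i L)^2 + J/2 * (∑ i, V n i * deriv (w i) L)^2
        + k₁/2 * (∑ i, U n i * deriv (w i) L)^2 + k₂/2 * (∑ i, U n i * w i L)^2
        + (1/2) * (ζ₁ n ⬝ᵥ P₁.mulVec (ζ₁ n))
        + (1/2) * (ζ₂ n ⬝ᵥ P₂.mulVec (ζ₂ n)))
      - Δt * (
          δ₁ * ((∑ i, (U (n+1) i - U n i) * deriv (w i) L) / Δt)^2
          + (1/2) * (q₁ ⬝ᵥ (fun l => (ζ₁ (n+1) l + ζ₁ n l) / 2)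
              + Real.sqrt (2 * (d₁ - δ₁))
                * ((∑ i, (U (n+1) i - U n i) * deriv (w i) L) / Δt))^2
          + δ₂ * ((∑ i, (U (n+1) i - U n i) * w i L) / Δt)^2
          + (1/2) * (q₂ ⬝ᵥ (fun l => (ζ₂ (n+1) l + ζ₂ n l) / 2)
              + Real.sqrt (2 * (d₂ - δ₂))
                * ((∑ i, (U (n+1) i - U n i) * w i L) / Δt))^2
          + ε₁/2 * ((fun l => (ζ₁ (n+1) l + ζ₁ n l) / 2)
              ⬝ᵥ P₁.mulVec (fun l => (ζ₁ (n+1) l + ζ₁ n l) / 2))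
          + ε₂/2 * ((fun l => (ζ₂ (n+1) l + ζ₂ n l) / 2)
              ⬝ᵥ P₂.mulVec (fun l => (ζ₂ (n+1) l + ζ₂ n l) / 2)))
      ∧
      Real.sqrt
        ((1/2) * (∫ x in (0:ℝ)..L, Λf x * (∑ i, U (n+1) i * iteratedDeriv 2 (w i) x)^2)
          + (1/2) * (∫ x in (0:ℝ)..L, μf x * (∑ i, V (n+1) i * w i x)^2)
          + M/2 * (∑ i, V (n+1) i * w i L)^2 + J/2 * (∑ i, V (n+1) i * deriv (w i) L)^2
          + k₁/2 * (∑ i, U (n+1) i * deriv (w i) L)^2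
          + k₂/2 * (∑ i, U (n+1) i * w i L)^2
          + (1/2) * (ζ₁ (n+1) ⬝ᵥ P₁.mulVec (ζ₁ (n+1)))
          + (1/2) * (ζ₂ (n+1) ⬝ᵥ P₂.mulVec (ζ₂ (n+1))))
      ≤ Real.sqrt
        ((1/2) * (∫ x in (0:ℝ)..L, Λf x * (∑ i, U n i * iteratedDeriv 2 (w i) x)^2)
          + (1/2) * (∫ x in (0:ℝ)..L, μf x * (∑ i, V n i * w i x)^2)
          + M/2 * (∑ i, V n i * w i L)^2 + J/2 * (∑ i, V n i * deriv (w i) L)^2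
          + k₁/2 * (∑ i, U n i * deriv (w i) L)^2 + k₂/2 * (∑ i, U n i * w i L)^2
          + (1/2) * (ζ₁ n ⬝ᵥ P₁.mulVec (ζ₁ n))
          + (1/2) * (ζ₂ n ⬝ᵥ P₂.mulVec (ζ₂ n))) := by
  intro n
  have hΔt' : Δt ≠ 0 := ne_of_gt hΔt
  have hg : ∀ i : Fin N, U (n+1) i - U n i = Δt * ((V (n+1) i + V n i) / 2) := by
    intro i
    have h := hCN1 n i
    field_simp at h
    linarith
  have hgsum : ∀ φ : Fin N → ℝ, (∑ j, (U (n+1) j - U n j) * φ j)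
      = Δt * (((∑ j, V (n+1) j * φ j) + ∑ j, V n j * φ j) / 2) := by
    intro φ
    rw [← cn_sum_avg (fun j => V (n+1) j) (fun j => V n j) φ, Finset.mul_sum]
    exact Finset.sum_congr rfl fun j _ => by rw [hg j]; ring
  have hwc : ∀ i : Fin N, Continuous (w i) := fun i => (hw i).continuous
  have hWm1 : ∀ i : Fin N, MeasureTheory.AEStronglyMeasurable (w i)
      (MeasureTheory.volume.restrict (Set.Ioc 0 L)) := fun i =>
    ((hwc i).measurable).aestronglyMeasurable
  have hWb1 : ∀ i : Fin N, ∃ B, ∀ x ∈ Set.Icc (0:ℝ) L, |w i x| ≤ B := by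
    intro i
    obtain ⟨C, hC⟩ := isCompact_Icc.exists_bound_of_continuousOn ((hwc i).continuousOn)
    exact ⟨C, fun x hx => by simpa [Real.norm_eq_abs] using hC x hx⟩
  have hWm2 : ∀ i : Fin N, MeasureTheory.AEStronglyMeasurable (iteratedDeriv 2 (w i))
      (MeasureTheory.volume.restrict (Set.Ioc 0 L)) := by
    intro i
    have h2 : iteratedDeriv 2 (w i) = deriv (deriv (w i)) := by
      funext x
      rw [iteratedDeriv_succ, iteratedDeriv_one]
    rw [h2]
    exact (measurable_deriv _).aestronglyMeasurable
  have E1 : (∑ j, (U (n+1) j - U n j) *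
        (∫ x in (0:ℝ)..L, μf x * (∑ i, (V (n+1) i - V n i) / Δt * w i x) * w j x))
      = (1/2) * (∫ x in (0:ℝ)..L, μf x * (∑ i, V (n+1) i * w i x)^2)
        - (1/2) * (∫ x in (0:ℝ)..L, μf x * (∑ i, V n i * w i x)^2) := by
    refine cn_energy_int hL.le μf hμ.continuousOn (fun i => w i) hWm1 hWb1
      (fun i => (V (n+1) i - V n i) / Δt) (fun j => U (n+1) j - U n j)
      (fun i => V (n+1) i) (fun i => V n i) ?_
    intro x
    rw [cn_sum_sub_div (fun i => V (n+1) i) (fun i => V n i) (fun i => w i x) Δt,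
        hgsum (fun j => w j x)]
    field_simp
    ring
  have E2 : (∑ j, (U (n+1) j - U n j) *
        (∫ x in (0:ℝ)..L, Λf x * (∑ i, (U (n+1) i + U n i) / 2 * iteratedDeriv 2 (w i) x)
          * iteratedDeriv 2 (w j) x))
      = (1/2) * (∫ x in (0:ℝ)..L, Λf x * (∑ i, U (n+1) i * iteratedDeriv 2 (w i) x)^2)
        - (1/2) * (∫ x in (0:ℝ)..L, Λf x * (∑ i, U n i * iteratedDeriv 2 (w i) x)^2) := by
    refine cn_energy_int hL.le Λf hΛ.continuousOn (fun i => iteratedDeriv 2 (w i)) hWm2 hwb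
      (fun i => (U (n+1) i + U n i) / 2) (fun j => U (n+1) j - U n j)
      (fun i => U (n+1) i) (fun i => U n i) ?_
    intro x
    rw [cn_sum_avg (fun i => U (n+1) i) (fun i => U n i) (fun i => iteratedDeriv 2 (w i) x),
        cn_sum_sub (fun i => U (n+1) i) (fun i => U n i) (fun i => iteratedDeriv 2 (w i) x)]
    ring
  have hA0 : (∑ j : Fin N, (U (n+1) j - U n j) * (
      (∫ x in (0:ℝ)..L, μf x * (∑ i, (V (n+1) i - V n i) / Δt * w i x) * w j x)
      + (∫ x in (0:ℝ)..L, Λf x * (∑ i, (U (n+1) i + U n i) / 2 * iteratedDeriv 2 (w i) x)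
          * iteratedDeriv 2 (w j) x)
      + M * (∑ i, (V (n+1) i - V n i) / Δt * w i L) * w j L
      + J * (∑ i, (V (n+1) i - V n i) / Δt * deriv (w i) L) * deriv (w j) L
      + k₁ * (∑ i, (U (n+1) i + U n i) / 2 * deriv (w i) L) * deriv (w j) L
      + k₂ * (∑ i, (U (n+1) i + U n i) / 2 * w i L) * w j L
      + d₁ * (∑ i, (V (n+1) i + V n i) / 2 * deriv (w i) L) * deriv (w j) L
      + d₂ * (∑ i, (V (n+1) i + V n i) / 2 * w i L) * w j L
      + (c₁ ⬝ᵥ (fun l => (ζ₁ (n+1) l + ζ₁ n l) / 2)) * deriv (w j) L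
      + (c₂ ⬝ᵥ (fun l => (ζ₂ (n+1) l + ζ₂ n l) / 2)) * w j L)) = 0 :=
    Finset.sum_eq_zero fun j _ => by rw [hCN2 n j, mul_zero]
  simp only [mul_add, Finset.sum_add_distrib] at hA0
  have S3 : (∑ j, (U (n+1) j - U n j) * (M * (∑ i, (V (n+1) i - V n i) / Δt * w i L) * w j L))
      = M * (∑ i, (V (n+1) i - V n i) / Δt * w i L) * ∑ j, (U (n+1) j - U n j) * w j L :=
    cn_sum_pull _ _ _
  have S4 : (∑ j, (U (n+1) j - U n j) *
        (J * (∑ i, (V (n+1) i - V n i) / Δt * deriv (w i) L) * deriv (w j) L))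
      = J * (∑ i, (V (n+1) i - V n i) / Δt * deriv (w i) L)
        * ∑ j, (U (n+1) j - U n j) * deriv (w j) L :=
    cn_sum_pull _ _ _
  have S5 : (∑ j, (U (n+1) j - U n j) *
        (k₁ * (∑ i, (U (n+1) i + U n i) / 2 * deriv (w i) L) * deriv (w j) L))
      = k₁ * (∑ i, (U (n+1) i + U n i) / 2 * deriv (w i) L)
        * ∑ j, (U (n+1) j - U n j) * deriv (w j) L :=
    cn_sum_pull _ _ _
  have S6 : (∑ j, (U (n+1) j - U n j) * (k₂ * (∑ i, (U (n+1) i + U n i) / 2 * w i L) * w j L))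
      = k₂ * (∑ i, (U (n+1) i + U n i) / 2 * w i L) * ∑ j, (U (n+1) j - U n j) * w j L :=
    cn_sum_pull _ _ _
  have S7 : (∑ j, (U (n+1) j - U n j) *
        (d₁ * (∑ i, (V (n+1) i + V n i) / 2 * deriv (w i) L) * deriv (w j) L))
      = d₁ * (∑ i, (V (n+1) i + V n i) / 2 * deriv (w i) L)
        * ∑ j, (U (n+1) j - U n j) * deriv (w j) L :=
    cn_sum_pull _ _ _
  have S8 : (∑ j, (U (n+1) j - U n j) * (d₂ * (∑ i, (V (n+1) i + V n i) / 2 * w i L) * w j L))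
      = d₂ * (∑ i, (V (n+1) i + V n i) / 2 * w i L) * ∑ j, (U (n+1) j - U n j) * w j L :=
    cn_sum_pull _ _ _
  have S9 : (∑ j, (U (n+1) j - U n j) *
        ((c₁ ⬝ᵥ (fun l => (ζ₁ (n+1) l + ζ₁ n l) / 2)) * deriv (w j) L))
      = (c₁ ⬝ᵥ (fun l => (ζ₁ (n+1) l + ζ₁ n l) / 2))
        * ∑ j, (U (n+1) j - U n j) * deriv (w j) L := by
    rw [Finset.mul_sum]
    exact Finset.sum_congr rfl fun j _ => by ring
  have S10 : (∑ j, (U (n+1) j - U n j) *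
        ((c₂ ⬝ᵥ (fun l => (ζ₂ (n+1) l + ζ₂ n l) / 2)) * w j L))
      = (c₂ ⬝ᵥ (fun l => (ζ₂ (n+1) l + ζ₂ n l) / 2)) * ∑ j, (U (n+1) j - U n j) * w j L := by
    rw [Finset.mul_sum]
    exact Finset.sum_congr rfl fun j _ => by ring
  rw [E1, E2, S3, S4, S5, S6, S7, S8, S9, S10] at hA0
  have r3 : (∑ i, (V (n+1) i - V n i) / Δt * w i L)
      = ((∑ i, V (n+1) i * w i L) - ∑ i, V n i * w i L) / Δt :=
    cn_sum_sub_div _ _ _ _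
  have r4 : (∑ i, (V (n+1) i - V n i) / Δt * deriv (w i) L)
      = ((∑ i, V (n+1) i * deriv (w i) L) - ∑ i, V n i * deriv (w i) L) / Δt :=
    cn_sum_sub_div _ _ _ _
  have r5 : (∑ i, (U (n+1) i + U n i) / 2 * deriv (w i) L)
      = ((∑ i, U (n+1) i * deriv (w i) L) + ∑ i, U n i * deriv (w i) L) / 2 :=
    cn_sum_avg _ _ _
  have r6 : (∑ i, (U (n+1) i + U n i) / 2 * w i L)
      = ((∑ i, U (n+1) i * w i L) + ∑ i, U n i * w i L) / 2 :=
    cn_sum_avg _ _ _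
  have r7 : (∑ i, (V (n+1) i + V n i) / 2 * deriv (w i) L)
      = ((∑ i, V (n+1) i * deriv (w i) L) + ∑ i, V n i * deriv (w i) L) / 2 :=
    cn_sum_avg _ _ _
  have r8 : (∑ i, (V (n+1) i + V n i) / 2 * w i L)
      = ((∑ i, V (n+1) i * w i L) + ∑ i, V n i * w i L) / 2 :=
    cn_sum_avg _ _ _
  have rgd : (∑ j, (U (n+1) j - U n j) * deriv (w j) L)
      = (∑ j, U (n+1) j * deriv (w j) L) - ∑ j, U n j * deriv (w j) L :=
    cn_sum_sub _ _ _
  have rgw : (∑ j, (U (n+1) j - U n j) * w j L)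
      = (∑ j, U (n+1) j * w j L) - ∑ j, U n j * w j L :=
    cn_sum_sub _ _ _
  have hrelη : (∑ j, U (n+1) j * deriv (w j) L) - (∑ j, U n j * deriv (w j) L)
      = Δt * (((∑ j, V (n+1) j * deriv (w j) L) + ∑ j, V n j * deriv (w j) L) / 2) := by
    rw [← rgd]; exact hgsum _
  have hrelγ : (∑ j, U (n+1) j * w j L) - (∑ j, U n j * w j L)
      = Δt * (((∑ j, V (n+1) j * w j L) + ∑ j, V n j * w j L) / 2) := by
    rw [← rgw]; exact hgsum _
  rw [r3, r4, r5, r6, r7, r8, rgd, rgw] at hA0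
  rw [hrelη, hrelγ] at hA0
  have hMfix : M * (((∑ i, V (n+1) i * w i L) - ∑ i, V n i * w i L) / Δt)
        * (Δt * (((∑ i, V (n+1) i * w i L) + ∑ i, V n i * w i L) / 2))
      = M * ((∑ i, V (n+1) i * w i L) - ∑ i, V n i * w i L)
        * (((∑ i, V (n+1) i * w i L) + ∑ i, V n i * w i L) / 2) := by
    field_simp
  have hJfix : J * (((∑ i, V (n+1) i * deriv (w i) L) - ∑ i, V n i * deriv (w i) L) / Δt)
        * (Δt * (((∑ i, V (n+1) i * deriv (w i) L) + ∑ i, V n i * deriv (w i) L) / 2))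
      = J * ((∑ i, V (n+1) i * deriv (w i) L) - ∑ i, V n i * deriv (w i) L)
        * (((∑ i, V (n+1) i * deriv (w i) L) + ∑ i, V n i * deriv (w i) L) / 2) := by
    field_simp
  rw [hMfix, hJfix] at hA0
  rw [rgd, rgw]
  have hyη : ((∑ j, U (n+1) j * deriv (w j) L) - ∑ j, U n j * deriv (w j) L) / Δt
      = ((∑ j, V (n+1) j * deriv (w j) L) + ∑ j, V n j * deriv (w j) L) / 2 := by
    rw [hrelη]
    exact mul_div_cancel_left₀ _ hΔt'
  have hyγ : ((∑ j, U (n+1) j * w j L) - ∑ j, U n j * w j L) / Δt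
      = ((∑ j, V (n+1) j * w j L) + ∑ j, V n j * w j L) / 2 := by
    rw [hrelγ]
    exact mul_div_cancel_left₀ _ hΔt'
  rw [hyη, hyγ]
  have hPt₁ : P₁ᵀ = P₁ := by
    have h := hP₁.1.eq
    rwa [Matrix.conjTranspose_eq_transpose_of_trivial] at h
  have hPt₂ : P₂ᵀ = P₂ := by
    have h := hP₂.1.eq
    rwa [Matrix.conjTranspose_eq_transpose_of_trivial] at h
  have hCN3' := hCN3 n
  rw [r7] at hCN3'
  have hCN4' := hCN4 n
  rw [r8] at hCN4'
  have hc1 := cn_ctrl_step A₁ P₁ hPt₁ b₁ c₁ q₁ ε₁ d₁ δ₁ _ Δt hΔt' hKYP₁ hPb₁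
    (ζ₁ (n+1)) (ζ₁ n) hCN3'
  have hc2 := cn_ctrl_step A₂ P₂ hPt₂ b₂ c₂ q₂ ε₂ d₂ δ₂ _ Δt hΔt' hKYP₂ hPb₂
    (ζ₂ (n+1)) (ζ₂ n) hCN4'
  have hsq₁ : Real.sqrt (2 * (d₁ - δ₁)) * Real.sqrt (2 * (d₁ - δ₁)) = 2 * (d₁ - δ₁) :=
    Real.mul_self_sqrt (by linarith)
  have hsq₂ : Real.sqrt (2 * (d₂ - δ₂)) * Real.sqrt (2 * (d₂ - δ₂)) = 2 * (d₂ - δ₂) :=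
    Real.mul_self_sqrt (by linarith)
  have hnn₁ : 0 ≤ (fun l => (ζ₁ (n+1) l + ζ₁ n l) / 2)
      ⬝ᵥ P₁.mulVec (fun l => (ζ₁ (n+1) l + ζ₁ n l) / 2) := by
    simpa using hP₁.posSemidef.dotProduct_mulVec_nonneg (fun l => (ζ₁ (n+1) l + ζ₁ n l) / 2)
  have hnn₂ : 0 ≤ (fun l => (ζ₂ (n+1) l + ζ₂ n l) / 2)
      ⬝ᵥ P₂.mulVec (fun l => (ζ₂ (n+1) l + ζ₂ n l) / 2) := by
    simpa using hP₂.posSemidef.dotProduct_mulVec_nonneg (fun l => (ζ₂ (n+1) l + ζ₂ n l) / 2)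
  set IL1 := (∫ x in (0:ℝ)..L, Λf x * (∑ i, U (n+1) i * iteratedDeriv 2 (w i) x)^2) with hIL1
  set IL0 := (∫ x in (0:ℝ)..L, Λf x * (∑ i, U n i * iteratedDeriv 2 (w i) x)^2) with hIL0
  set IM1 := (∫ x in (0:ℝ)..L, μf x * (∑ i, V (n+1) i * w i x)^2) with hIM1
  set IM0 := (∫ x in (0:ℝ)..L, μf x * (∑ i, V n i * w i x)^2) with hIM0
  set SA1 := (∑ i, V (n+1) i * w i L) with hSA1
  set SA0 := (∑ i, V n i * w i L) with hSA0
  set SB1 := (∑ i, V (n+1) i * deriv (w i) L) with hSB1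
  set SB0 := (∑ i, V n i * deriv (w i) L) with hSB0
  set SC1 := (∑ i, U (n+1) i * w i L) with hSC1
  set SC0 := (∑ i, U n i * w i L) with hSC0
  set SD1 := (∑ i, U (n+1) i * deriv (w i) L) with hSD1
  set SD0 := (∑ i, U n i * deriv (w i) L) with hSD0
  set Q1 := (q₁ ⬝ᵥ (fun l => (ζ₁ (n+1) l + ζ₁ n l) / 2)) with hQ1
  set Q2 := (q₂ ⬝ᵥ (fun l => (ζ₂ (n+1) l + ζ₂ n l) / 2)) with hQ2
  set C1 := (c₁ ⬝ᵥ (fun l => (ζ₁ (n+1) l + ζ₁ n l) / 2)) with hC1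
  set C2 := (c₂ ⬝ᵥ (fun l => (ζ₂ (n+1) l + ζ₂ n l) / 2)) with hC2
  set R1 := ((fun l => (ζ₁ (n+1) l + ζ₁ n l) / 2)
      ⬝ᵥ P₁.mulVec (fun l => (ζ₁ (n+1) l + ζ₁ n l) / 2)) with hR1
  set R2 := ((fun l => (ζ₂ (n+1) l + ζ₂ n l) / 2)
      ⬝ᵥ P₂.mulVec (fun l => (ζ₂ (n+1) l + ζ₂ n l) / 2)) with hR2
  set Z1p := (ζ₁ (n+1) ⬝ᵥ P₁.mulVec (ζ₁ (n+1))) with hZ1p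
  set Z1m := (ζ₁ n ⬝ᵥ P₁.mulVec (ζ₁ n)) with hZ1m
  set Z2p := (ζ₂ (n+1) ⬝ᵥ P₂.mulVec (ζ₂ (n+1))) with hZ2p
  set Z2m := (ζ₂ n ⬝ᵥ P₂.mulVec (ζ₂ n)) with hZ2m
  set s1 := Real.sqrt (2 * (d₁ - δ₁)) with hs1
  set s2 := Real.sqrt (2 * (d₂ - δ₂)) with hs2
  clear_value IL1 IL0 IM1 IM0 SA1 SA0 SB1 SB0 SC1 SC0 SD1 SD0 Q1 Q2 C1 C2 R1 R2 Z1p Z1m Z2p Z2m s1 s2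
  have key : (1/2) * IL1 + (1/2) * IM1 + M/2 * SA1^2 + J/2 * SB1^2
        + k₁/2 * SD1^2 + k₂/2 * SC1^2 + (1/2) * Z1p + (1/2) * Z2p
      = (1/2) * IL0 + (1/2) * IM0 + M/2 * SA0^2 + J/2 * SB0^2
        + k₁/2 * SD0^2 + k₂/2 * SC0^2 + (1/2) * Z1m + (1/2) * Z2m
        - Δt * (δ₁ * ((SB1 + SB0) / 2)^2
          + (1/2) * (Q1 + s1 * ((SB1 + SB0) / 2))^2
          + δ₂ * ((SA1 + SA0) / 2)^2
          + (1/2) * (Q2 + s2 * ((SA1 + SA0) / 2))^2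
          + ε₁/2 * R1 + ε₂/2 * R2) := by
    linear_combination hA0 + hc1 + hc2
      + (k₁ * (SD1 + SD0) / 2) * hrelη + (k₂ * (SC1 + SC0) / 2) * hrelγ
      + (Δt * ((SB1 + SB0) / 2)^2 / 2) * hsq₁
      + (Δt * ((SA1 + SA0) / 2)^2 / 2) * hsq₂
  refine ⟨key, ?_⟩
  apply Real.sqrt_le_sqrt
  rw [key, sub_le_self_iff]
  refine mul_nonneg hΔt.le ?_
  have h1 : 0 ≤ δ₁ * ((SB1 + SB0) / 2)^2 := mul_nonneg hδ₁.le (sq_nonneg _)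
  have h2 : 0 ≤ (1/2 : ℝ) * (Q1 + s1 * ((SB1 + SB0) / 2))^2 := by positivity
  have h3 : 0 ≤ δ₂ * ((SA1 + SA0) / 2)^2 := mul_nonneg hδ₂.le (sq_nonneg _)
  have h4 : 0 ≤ (1/2 : ℝ) * (Q2 + s2 * ((SA1 + SA0) / 2))^2 := by positivity
  have h5 : 0 ≤ ε₁/2 * R1 := mul_nonneg (by linarith) hnn₁
  have h6 : 0 ≤ ε₂/2 * R2 := mul_nonneg (by linarith) hnn₂
  linarith
end

section
/- For the uncontrolled beam, i.e. the Crank–Nicolson scheme with control inputs Θ₁ = Θ₂ = 0 (so that the k₁, k₂, d₁, d₂ and controller coupling terms are absent), the discrete energy ‖zⁿ‖² = ½∫₀ᴸΛ(uⁿ_{xx})²dx + ½∫₀ᴸμ(vⁿ)²dx + (M/2)vⁿ(L)² + (J/2)vⁿ_x(L)² is exactly conserved: ‖zⁿ⁺¹‖ = ‖zⁿ‖ for all n ∈ ℕ₀, for any finite-dimensional subspace W_h ⊂ H̃²₀(0,L) and any time step Δt > 0. -/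
open Real Set intervalIntegral Matrix

lemma contAt_iter2 {f : ℝ → ℝ} {x : ℝ} (h : ContDiffAt ℝ 2 f x) :
    ContinuousAt (iteratedDeriv 2 f) x := by
  obtain ⟨u, hu, hfu⟩ := h.contDiffOn le_rfl (by simp)
  obtain ⟨t, htu, hto, hxt⟩ := mem_nhds_iff.1 hu
  have h1 : ContinuousOn (iteratedDerivWithin 2 f t) t :=
    (hfu.mono htu).continuousOn_iteratedDerivWithin (by norm_num) hto.uniqueDiffOn
  have h2 : Set.EqOn (iteratedDeriv 2 f) (iteratedDerivWithin 2 f t) t := by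
    intro y hy
    rw [iteratedDeriv_eq_iteratedFDeriv, iteratedDerivWithin_eq_iteratedFDerivWithin,
      iteratedFDerivWithin_of_isOpen 2 hto hy]
  exact (h1.congr h2).continuousAt (hto.mem_nhds hxt)

/-- for the uncontrolled beam (Θ₁ = Θ₂ = 0, no controller terms), the
Crank–Nicolson scheme conserves the discrete energy exactly:
`‖zⁿ⁺¹‖ = ‖zⁿ‖` for all `n`, for any finite-dimensional subspace `W_h ⊂ H̃²₀(0,L)`
(spanned by `w i`) and any time step `Δt > 0`. -/
theorem crank_nicolson_uncontrolled_conservation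
    -- beam data
    (L : ℝ) (hL : 0 < L)
    (μf Λf : ℝ → ℝ)
    (hμ : ContDiffOn ℝ 4 μf (Set.Icc 0 L)) (hΛ : ContDiffOn ℝ 4 Λf (Set.Icc 0 L))
    (hμpos : ∀ x ∈ Set.Icc 0 L, 0 < μf x) (hΛpos : ∀ x ∈ Set.Icc 0 L, 0 < Λf x)
    (M J : ℝ) (hM : 0 < M) (hJ : 0 < J)
    -- the finite element space W_h ⊂ H̃²₀(0,L), spanned by w₁, …, w_N
    (N : ℕ) (w : Fin N → ℝ → ℝ)
    (hw : ∀ i, ContDiff ℝ 1 (w i))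
    (hw0 : ∀ i, w i 0 = 0) (hw0x : ∀ i, deriv (w i) 0 = 0)
    (hw2 : ∀ i, ∃ S : Finset ℝ, ∀ x ∉ S, ContDiffAt ℝ 2 (w i) x)
    (hwb : ∀ i, ∃ B : ℝ, ∀ x ∈ Set.Icc (0:ℝ) L, |iteratedDeriv 2 (w i) x| ≤ B)
    -- the time step and the Crank–Nicolson iterates uⁿ = ∑ᵢ Uⁿᵢ wᵢ, vⁿ = ∑ᵢ Vⁿᵢ wᵢ
    (Δt : ℝ) (hΔt : 0 < Δt)
    (U V : ℕ → Fin N → ℝ)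
    -- (uⁿ⁺¹ − uⁿ)/Δt = (vⁿ⁺¹ + vⁿ)/2
    (hCN1 : ∀ n : ℕ, ∀ i : Fin N, (U (n+1) i - U n i) / Δt = (V (n+1) i + V n i) / 2)
    -- the uncontrolled Crank–Nicolson equation, tested with each basis function w_j
    (hCN2 : ∀ n : ℕ, ∀ j : Fin N,
      (∫ x in (0:ℝ)..L, μf x * (∑ i, (V (n+1) i - V n i) / Δt * w i x) * w j x)
      + (∫ x in (0:ℝ)..L, Λf x * (∑ i, (U (n+1) i + U n i) / 2 * iteratedDeriv 2 (w i) x)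
          * iteratedDeriv 2 (w j) x)
      + M * (∑ i, (V (n+1) i - V n i) / Δt * w i L) * w j L
      + J * (∑ i, (V (n+1) i - V n i) / Δt * deriv (w i) L) * deriv (w j) L = 0) :
    -- conclusion: exact conservation of the discrete energy
    ∀ n : ℕ,
      Real.sqrt
        ((1/2) * (∫ x in (0:ℝ)..L, Λf x * (∑ i, U (n+1) i * iteratedDeriv 2 (w i) x)^2)
          + (1/2) * (∫ x in (0:ℝ)..L, μf x * (∑ i, V (n+1) i * w i x)^2)
          + M/2 * (∑ i, V (n+1) i * w i L)^2
          + J/2 * (∑ i, V (n+1) i * deriv (w i) L)^2)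
      = Real.sqrt
        ((1/2) * (∫ x in (0:ℝ)..L, Λf x * (∑ i, U n i * iteratedDeriv 2 (w i) x)^2)
          + (1/2) * (∫ x in (0:ℝ)..L, μf x * (∑ i, V n i * w i x)^2)
          + M/2 * (∑ i, V n i * w i L)^2
          + J/2 * (∑ i, V n i * deriv (w i) L)^2) := by
  have hΔ0 : Δt ≠ 0 := hΔt.ne'
  have hwc : ∀ i, Continuous (w i) := fun i => (hw i).continuous
  -- boundedness and a.e.-measurability of the second derivatives
  choose B hB using hwb
  have hB0 : ∀ i, 0 ≤ B i := fun i => (abs_nonneg _).trans (hB i 0 ⟨le_rfl, hL.le⟩)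
  have hgm : ∀ i, MeasureTheory.AEStronglyMeasurable (iteratedDeriv 2 (w i))
      (MeasureTheory.volume.restrict (Set.Ioc 0 L)) := by
    intro i
    obtain ⟨S, hS⟩ := hw2 i
    have hco : ContinuousOn (iteratedDeriv 2 (w i)) ((↑S : Set ℝ)ᶜ) :=
      fun x hx => (contAt_iter2 (hS x hx)).continuousWithinAt
    have h1 : AEMeasurable (iteratedDeriv 2 (w i))
        (MeasureTheory.volume.restrict ((↑S : Set ℝ)ᶜ)) :=
      hco.aemeasurable S.finite_toSet.measurableSet.compl
    have h0 : MeasureTheory.volume.restrict ((↑S : Set ℝ)ᶜ) = MeasureTheory.volume := by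
      rw [MeasureTheory.Measure.restrict_congr_set
          (MeasureTheory.ae_eq_univ.2 (by rw [compl_compl]; exact S.finite_toSet.measure_zero _)),
        MeasureTheory.Measure.restrict_univ]
    rw [h0] at h1
    exact h1.aestronglyMeasurable.restrict
  -- generic bounded-integrability criterion on [0, L]
  have hbdd : ∀ (F : ℝ → ℝ) (C : ℝ),
      MeasureTheory.AEStronglyMeasurable F (MeasureTheory.volume.restrict (Set.Ioc 0 L)) →
      (∀ x ∈ Set.Icc (0:ℝ) L, |F x| ≤ C) → IntervalIntegrable F MeasureTheory.volume 0 L := by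
    intro F C hFm hFC
    rw [intervalIntegrable_iff_integrableOn_Ioc_of_le hL.le]
    refine ⟨hFm, MeasureTheory.HasFiniteIntegral.restrict_of_bounded (C := C)
      measure_Ioc_lt_top ?_⟩
    filter_upwards [MeasureTheory.ae_restrict_mem measurableSet_Ioc] with x hx
    rw [Real.norm_eq_abs]
    exact hFC x ⟨hx.1.le, hx.2⟩
  -- integrability of Λ · (lin.comb. of w'')·(lin.comb. of w'')
  have hgen : ∀ a b : Fin N → ℝ, IntervalIntegrable
      (fun x => Λf x * (∑ i, a i * iteratedDeriv 2 (w i) x)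
        * (∑ i, b i * iteratedDeriv 2 (w i) x)) MeasureTheory.volume 0 L := by
    intro a b
    obtain ⟨CΛ, hCΛ⟩ := isCompact_Icc.exists_bound_of_continuousOn hΛ.continuousOn
    have hCΛ0 : 0 ≤ CΛ := (norm_nonneg _).trans (hCΛ 0 ⟨le_rfl, hL.le⟩)
    have habs : ∀ (a : Fin N → ℝ) (x : ℝ), x ∈ Set.Icc (0:ℝ) L →
        |∑ i, a i * iteratedDeriv 2 (w i) x| ≤ ∑ i, |a i| * B i := by
      intro a x hx
      refine (Finset.abs_sum_le_sum_abs _ _).trans (Finset.sum_le_sum fun i _ => ?_)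
      rw [abs_mul]
      exact mul_le_mul_of_nonneg_left (hB i x hx) (abs_nonneg _)
    have hC0 : ∀ a : Fin N → ℝ, 0 ≤ ∑ i, |a i| * B i :=
      fun a => Finset.sum_nonneg fun i _ => mul_nonneg (abs_nonneg _) (hB0 i)
    have hΛm : MeasureTheory.AEStronglyMeasurable Λf
        (MeasureTheory.volume.restrict (Set.Ioc 0 L)) :=
      ((hΛ.continuousOn.mono Set.Ioc_subset_Icc_self).aemeasurable
        measurableSet_Ioc).aestronglyMeasurable
    have hsm : ∀ a : Fin N → ℝ, MeasureTheory.AEStronglyMeasurable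
        (fun x => ∑ i, a i * iteratedDeriv 2 (w i) x)
        (MeasureTheory.volume.restrict (Set.Ioc 0 L)) :=
      fun a => Finset.aestronglyMeasurable_fun_sum _
        (fun i _ => MeasureTheory.aestronglyMeasurable_const.mul (hgm i))
    refine hbdd _ (CΛ * (∑ i, |a i| * B i) * (∑ i, |b i| * B i))
      ((hΛm.mul (hsm a)).mul (hsm b)) ?_
    intro x hx
    rw [abs_mul, abs_mul]
    exact mul_le_mul (mul_le_mul ((Real.norm_eq_abs _ ▸ hCΛ x hx)) (habs a x hx)
      (abs_nonneg _) hCΛ0) (habs b x hx) (abs_nonneg _) (mul_nonneg hCΛ0 (hC0 a))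
  intro n
  congr 1
  -- pointwise/algebraic key identities
  have hkey : ∀ (mm : ℝ) (φ : Fin N → ℝ),
      ∑ j, (V (n+1) j + V n j)/2 * (mm * (∑ i, (V (n+1) i - V n i)/Δt * φ i) * φ j)
      = 1/(2*Δt) * (mm * (∑ i, V (n+1) i * φ i)^2 - mm * (∑ i, V n i * φ i)^2) := by
    intro mm φ
    have h2 : ∑ j, (V (n+1) j + V n j)/2 * (mm * (∑ i, (V (n+1) i - V n i)/Δt * φ i) * φ j)
        = mm * (∑ i, (V (n+1) i - V n i)/Δt * φ i) * ∑ j, (V (n+1) j + V n j)/2 * φ j := by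
      set K := mm * (∑ i, (V (n+1) i - V n i)/Δt * φ i) with hK
      rw [Finset.mul_sum]; exact Finset.sum_congr rfl fun j _ => by ring
    have h1 : ∑ i, V (n+1) i * φ i
        = (∑ i, V n i * φ i) + Δt * ∑ i, (V (n+1) i - V n i)/Δt * φ i := by
      rw [Finset.mul_sum, ← Finset.sum_add_distrib]
      exact Finset.sum_congr rfl fun i _ => by field_simp; ring
    have h3 : ∑ j, (V (n+1) j + V n j)/2 * φ j
        = (∑ i, V n i * φ i) + Δt/2 * ∑ i, (V (n+1) i - V n i)/Δt * φ i := by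
      rw [Finset.mul_sum, ← Finset.sum_add_distrib]
      refine Finset.sum_congr rfl fun i _ => ?_
      field_simp; ring
    rw [h2, h3, h1]; field_simp; ring
  have hkeyU : ∀ (mm : ℝ) (φ : Fin N → ℝ),
      ∑ j, (V (n+1) j + V n j)/2 * (mm * (∑ i, (U (n+1) i + U n i)/2 * φ i) * φ j)
      = 1/(2*Δt) * (mm * (∑ i, U (n+1) i * φ i)^2 - mm * (∑ i, U n i * φ i)^2) := by
    intro mm φ
    simp only [← hCN1 n]
    have h2 : ∑ j, (U (n+1) j - U n j)/Δt * (mm * (∑ i, (U (n+1) i + U n i)/2 * φ i) * φ j)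
        = mm * (∑ i, (U (n+1) i + U n i)/2 * φ i) * ∑ j, (U (n+1) j - U n j)/Δt * φ j := by
      set K := mm * (∑ i, (U (n+1) i + U n i)/2 * φ i) with hK
      rw [Finset.mul_sum]; exact Finset.sum_congr rfl fun j _ => by ring
    have h1 : ∑ i, U (n+1) i * φ i
        = (∑ i, U n i * φ i) + Δt * ∑ i, (U (n+1) i - U n i)/Δt * φ i := by
      rw [Finset.mul_sum, ← Finset.sum_add_distrib]
      exact Finset.sum_congr rfl fun i _ => by field_simp; ring
    have h3 : ∑ i, (U (n+1) i + U n i)/2 * φ i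
        = (∑ i, U n i * φ i) + Δt/2 * ∑ i, (U (n+1) i - U n i)/Δt * φ i := by
      rw [Finset.mul_sum, ← Finset.sum_add_distrib]
      refine Finset.sum_congr rfl fun i _ => ?_
      field_simp; ring
    rw [h2, h3, h1]; field_simp; ring
  -- continuity-based integrability (μ terms)
  have hucont : ContinuousOn μf (Set.uIcc 0 L) := by
    rw [Set.uIcc_of_le hL.le]; exact hμ.continuousOn
  have hμEwint : ∀ j : Fin N, IntervalIntegrable
      (fun x => (V (n+1) j + V n j)/2
        * (μf x * (∑ i, (V (n+1) i - V n i)/Δt * w i x) * w j x))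
      MeasureTheory.volume 0 L := by
    intro j
    exact (continuousOn_const.mul ((hucont.mul (continuous_finset_sum _
      (fun i _ => continuous_const.mul (hwc i))).continuousOn).mul
      (hwc j).continuousOn)).intervalIntegrable
  have hμQint : ∀ m : ℕ, IntervalIntegrable (fun x => μf x * (∑ i, V m i * w i x)^2)
      MeasureTheory.volume 0 L := fun m =>
    (hucont.mul ((continuous_finset_sum _
      (fun i _ => continuous_const.mul (hwc i))).pow 2).continuousOn).intervalIntegrable
  -- integrability (Λ terms)
  have hΛDint : ∀ j : Fin N, IntervalIntegrable
      (fun x => (V (n+1) j + V n j)/2 * (Λf x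
        * (∑ i, (U (n+1) i + U n i)/2 * iteratedDeriv 2 (w i) x) * iteratedDeriv 2 (w j) x))
      MeasureTheory.volume 0 L := by
    intro j
    have h := hgen (fun i => (V (n+1) j + V n j)/2 * ((U (n+1) i + U n i)/2))
      (fun i => if i = j then 1 else 0)
    have hfeq : (fun x => (V (n+1) j + V n j)/2 * (Λf x
        * (∑ i, (U (n+1) i + U n i)/2 * iteratedDeriv 2 (w i) x) * iteratedDeriv 2 (w j) x))
        = (fun x => Λf x
          * (∑ i, ((V (n+1) j + V n j)/2 * ((U (n+1) i + U n i)/2)) * iteratedDeriv 2 (w i) x)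
          * (∑ i, (if i = j then (1:ℝ) else 0) * iteratedDeriv 2 (w i) x)) := by
      funext x
      rw [show (∑ i, (if i = j then (1:ℝ) else 0) * iteratedDeriv 2 (w i) x)
          = iteratedDeriv 2 (w j) x by simp,
        show (∑ i, ((V (n+1) j + V n j)/2 * ((U (n+1) i + U n i)/2)) * iteratedDeriv 2 (w i) x)
          = (V (n+1) j + V n j)/2 * ∑ i, (U (n+1) i + U n i)/2 * iteratedDeriv 2 (w i) x by
            rw [Finset.mul_sum]; exact Finset.sum_congr rfl fun i _ => by ring]
      ring
    rw [hfeq]; exact h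
  have hΛsq : ∀ m : ℕ, IntervalIntegrable
      (fun x => Λf x * (∑ i, U m i * iteratedDeriv 2 (w i) x)^2) MeasureTheory.volume 0 L := by
    intro m
    have h := hgen (fun i => U m i) (fun i => U m i)
    have hfeq : (fun x => Λf x * (∑ i, U m i * iteratedDeriv 2 (w i) x)^2)
        = (fun x => Λf x * (∑ i, U m i * iteratedDeriv 2 (w i) x)
          * (∑ i, U m i * iteratedDeriv 2 (w i) x)) := by
      funext x; ring
    rw [hfeq]; exact h
  -- the four summed terms
  have hT1 : ∑ j, (V (n+1) j + V n j)/2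
        * (∫ x in (0:ℝ)..L, μf x * (∑ i, (V (n+1) i - V n i)/Δt * w i x) * w j x)
      = 1/(2*Δt) * ((∫ x in (0:ℝ)..L, μf x * (∑ i, V (n+1) i * w i x)^2)
        - ∫ x in (0:ℝ)..L, μf x * (∑ i, V n i * w i x)^2) := by
    calc ∑ j, (V (n+1) j + V n j)/2
        * (∫ x in (0:ℝ)..L, μf x * (∑ i, (V (n+1) i - V n i)/Δt * w i x) * w j x)
        = ∑ j, ∫ x in (0:ℝ)..L, (V (n+1) j + V n j)/2
            * (μf x * (∑ i, (V (n+1) i - V n i)/Δt * w i x) * w j x) :=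
          Finset.sum_congr rfl fun j _ => (intervalIntegral.integral_const_mul _ _).symm
      _ = ∫ x in (0:ℝ)..L, ∑ j, (V (n+1) j + V n j)/2
            * (μf x * (∑ i, (V (n+1) i - V n i)/Δt * w i x) * w j x) :=
          (intervalIntegral.integral_finset_sum fun j _ => hμEwint j).symm
      _ = ∫ x in (0:ℝ)..L, 1/(2*Δt) * (μf x * (∑ i, V (n+1) i * w i x)^2
            - μf x * (∑ i, V n i * w i x)^2) :=
          intervalIntegral.integral_congr fun x _ => hkey (μf x) (fun i => w i x)
      _ = 1/(2*Δt) * ∫ x in (0:ℝ)..L, (μf x * (∑ i, V (n+1) i * w i x)^2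
            - μf x * (∑ i, V n i * w i x)^2) := intervalIntegral.integral_const_mul _ _
      _ = 1/(2*Δt) * ((∫ x in (0:ℝ)..L, μf x * (∑ i, V (n+1) i * w i x)^2)
            - ∫ x in (0:ℝ)..L, μf x * (∑ i, V n i * w i x)^2) := by
          rw [intervalIntegral.integral_sub (hμQint (n+1)) (hμQint n)]
  have hT2 : ∑ j, (V (n+1) j + V n j)/2
        * (∫ x in (0:ℝ)..L, Λf x * (∑ i, (U (n+1) i + U n i)/2 * iteratedDeriv 2 (w i) x)
            * iteratedDeriv 2 (w j) x)
      = 1/(2*Δt) * ((∫ x in (0:ℝ)..L, Λf x * (∑ i, U (n+1) i * iteratedDeriv 2 (w i) x)^2)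
        - ∫ x in (0:ℝ)..L, Λf x * (∑ i, U n i * iteratedDeriv 2 (w i) x)^2) := by
    calc ∑ j, (V (n+1) j + V n j)/2
        * (∫ x in (0:ℝ)..L, Λf x * (∑ i, (U (n+1) i + U n i)/2 * iteratedDeriv 2 (w i) x)
            * iteratedDeriv 2 (w j) x)
        = ∑ j, ∫ x in (0:ℝ)..L, (V (n+1) j + V n j)/2
            * (Λf x * (∑ i, (U (n+1) i + U n i)/2 * iteratedDeriv 2 (w i) x)
              * iteratedDeriv 2 (w j) x) :=
          Finset.sum_congr rfl fun j _ => (intervalIntegral.integral_const_mul _ _).symm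
      _ = ∫ x in (0:ℝ)..L, ∑ j, (V (n+1) j + V n j)/2
            * (Λf x * (∑ i, (U (n+1) i + U n i)/2 * iteratedDeriv 2 (w i) x)
              * iteratedDeriv 2 (w j) x) :=
          (intervalIntegral.integral_finset_sum fun j _ => hΛDint j).symm
      _ = ∫ x in (0:ℝ)..L, 1/(2*Δt) * (Λf x * (∑ i, U (n+1) i * iteratedDeriv 2 (w i) x)^2
            - Λf x * (∑ i, U n i * iteratedDeriv 2 (w i) x)^2) :=
          intervalIntegral.integral_congr fun x _ =>
            hkeyU (Λf x) (fun i => iteratedDeriv 2 (w i) x)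
      _ = 1/(2*Δt) * ∫ x in (0:ℝ)..L, (Λf x * (∑ i, U (n+1) i * iteratedDeriv 2 (w i) x)^2
            - Λf x * (∑ i, U n i * iteratedDeriv 2 (w i) x)^2) :=
          intervalIntegral.integral_const_mul _ _
      _ = 1/(2*Δt) * ((∫ x in (0:ℝ)..L, Λf x * (∑ i, U (n+1) i * iteratedDeriv 2 (w i) x)^2)
            - ∫ x in (0:ℝ)..L, Λf x * (∑ i, U n i * iteratedDeriv 2 (w i) x)^2) := by
          rw [intervalIntegral.integral_sub (hΛsq (n+1)) (hΛsq n)]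
  have hT3 : ∑ j, (V (n+1) j + V n j)/2 * (M * (∑ i, (V (n+1) i - V n i)/Δt * w i L) * w j L)
      = 1/(2*Δt) * (M * (∑ i, V (n+1) i * w i L)^2 - M * (∑ i, V n i * w i L)^2) :=
    hkey M fun i => w i L
  have hT4 : ∑ j, (V (n+1) j + V n j)/2
        * (J * (∑ i, (V (n+1) i - V n i)/Δt * deriv (w i) L) * deriv (w j) L)
      = 1/(2*Δt) * (J * (∑ i, V (n+1) i * deriv (w i) L)^2
        - J * (∑ i, V n i * deriv (w i) L)^2) :=
    hkey J fun i => deriv (w i) L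
  -- sum the Crank–Nicolson equations against the coefficients (V (n+1) j + V n j)/2
  have hS : ∑ j, (V (n+1) j + V n j)/2 *
      ((∫ x in (0:ℝ)..L, μf x * (∑ i, (V (n+1) i - V n i) / Δt * w i x) * w j x)
      + (∫ x in (0:ℝ)..L, Λf x * (∑ i, (U (n+1) i + U n i) / 2 * iteratedDeriv 2 (w i) x)
          * iteratedDeriv 2 (w j) x)
      + M * (∑ i, (V (n+1) i - V n i) / Δt * w i L) * w j L
      + J * (∑ i, (V (n+1) i - V n i) / Δt * deriv (w i) L) * deriv (w j) L) = 0 :=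
    Finset.sum_eq_zero fun j _ => by rw [hCN2 n j, mul_zero]
  simp only [mul_add, Finset.sum_add_distrib] at hS
  rw [hT1, hT2, hT3, hT4] at hS
  have hfrac : (1:ℝ)/(2*Δt) ≠ 0 := by positivity
  have hD : ((∫ x in (0:ℝ)..L, μf x * (∑ i, V (n+1) i * w i x)^2)
        - ∫ x in (0:ℝ)..L, μf x * (∑ i, V n i * w i x)^2)
      + ((∫ x in (0:ℝ)..L, Λf x * (∑ i, U (n+1) i * iteratedDeriv 2 (w i) x)^2)
        - ∫ x in (0:ℝ)..L, Λf x * (∑ i, U n i * iteratedDeriv 2 (w i) x)^2)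
      + (M * (∑ i, V (n+1) i * w i L)^2 - M * (∑ i, V n i * w i L)^2)
      + (J * (∑ i, V (n+1) i * deriv (w i) L)^2 - J * (∑ i, V n i * deriv (w i) L)^2) = 0 := by
    have := hS
    field_simp at this
    linarith [this]
  linear_combination (1/2) * hD
end
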